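/- Let C ⊆ E be a convex set and let {N_α}_{α∈I} be a nonempty family of normal cones of C. Then the intersection ⋂_{α∈I} N_α is again a normal cone of C, and for every α̃ ∈ I with N_α̃ ≠ E, the intersection ⋂_{α∈I} N_α is a face of the convex cone N_α̃. -/
import Mathlib


open scoped Pointwise RealInnerProductSpace

variable {E : Type*} [NormedAddCommGroup E] [InnerProductSpace ℝ E] [FiniteDimensional ℝ E]

/-- `F` is a face of the convex set `C`: a convex subset of `C` such that whenever an open
segment between two points of `C` meets `F`, both endpoints belong to `F`. -/
def IsFace (C F : Set E) : Prop :=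
  Convex ℝ F ∧ F ⊆ C ∧
    ∀ x ∈ C, ∀ y ∈ C, (openSegment ℝ x y ∩ F).Nonempty → x ∈ F ∧ y ∈ F

/-- The exposed face `F⊥(C,u)` of `C` by the vector `u`: the points of `C` where `⟨u,·⟩`
attains its supremum over `C`. -/
def expFace (C : Set E) (u : E) : Set E :=
  {x ∈ C | ∀ y ∈ C, ⟪u, y⟫ ≤ ⟪u, x⟫}

/-- `F` is an exposed face of `C`: either `∅`, or `C`, or `F⊥(C,u)` for some nonzero `u`. -/
def IsExpFace (C F : Set E) : Prop :=
  F = ∅ ∨ F = C ∨ ∃ u : E, u ≠ 0 ∧ F = expFace C u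

/-- The normal cone `N(C,x)` of `C` at the point `x`. -/
def normalCone (C : Set E) (x : E) : Set E :=
  {u | ∀ y ∈ C, ⟪u, y - x⟫ ≤ 0}

/-- The normal cone `N(C,F)` of `C` at a subset `F`; for a nonempty convex `F ⊆ C` it agrees
with `normalCone C x` for any `x` in the relative interior of `F` (all these coincide), and
for `F = ∅` it is all of `E`. -/
def normalConeOf (C F : Set E) : Set E :=
  ⋂ x ∈ intrinsicInterior ℝ F, normalCone C x

/-- `N` is a normal cone of `C`: the normal cone of some face of `C`. -/
def IsNormalCone (C N : Set E) : Prop :=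
  ∃ F, IsFace C F ∧ N = normalConeOf C F

/-- `T` is a touching cone of `C`: a nonempty face of a normal cone of `C`. -/
def IsTouchingCone (C T : Set E) : Prop :=
  T.Nonempty ∧ ∃ N, IsNormalCone C N ∧ IsFace N T

/-- The positive hull of a set: all finite nonnegative combinations (`posHull ∅ = {0}`). -/
def posHull (S : Set E) : Set E :=
  {x | ∃ (k : ℕ) (c : Fin k → ℝ) (s : Fin k → E),
    (∀ i, 0 ≤ c i) ∧ (∀ i, s i ∈ S) ∧ x = ∑ i, c i • s i}

/-- A vector `u` is sharp normal for `C` if every `x ∈ ri(F⊥(C,u))` satisfies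
`u ∈ ri(N(C,x))`. -/
def SharpNormal (C : Set E) (u : E) : Prop :=
  ∀ x ∈ intrinsicInterior ℝ (expFace C u), u ∈ intrinsicInterior ℝ (normalCone C x)

/-- A point `x` is sharp exposed in `C` if every nonzero `u ∈ ri(N(C,x))` satisfies
`x ∈ ri(F⊥(C,u))`. -/
def SharpExposed (C : Set E) (x : E) : Prop :=
  ∀ u ∈ intrinsicInterior ℝ (normalCone C x), u ≠ 0 → x ∈ intrinsicInterior ℝ (expFace C u)

/-- The smallest exposed face of `C` containing `F`: the intersection of all exposed faces
of `C` containing `F`. -/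
def supExp (C F : Set E) : Set E :=
  ⋂₀ {G | IsExpFace C G ∧ F ⊆ G}

/-- The polar body of `K`. -/
def polarBody (K : Set E) : Set E := {u | ∀ y ∈ K, ⟪u, y⟫ ≤ 1}


lemma exists_openSegment' {D : Set E} {x y : E}
    (hx : x ∈ intrinsicInterior ℝ D) (hy : y ∈ D) :
    ∃ z ∈ D, x ∈ openSegment ℝ y z := by
  obtain ⟨x', hx', hxx⟩ := mem_intrinsicInterior.1 hx
  have hxspan : x ∈ affineSpan ℝ D := hxx ▸ x'.2
  have hyspan : y ∈ affineSpan ℝ D := subset_affineSpan ℝ D hy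
  have hmem : ∀ t : ℝ, y + t • (x - y) ∈ affineSpan ℝ D := by
    intro t
    have := (affineSpan ℝ D).smul_vsub_vadd_mem t hxspan hyspan hyspan
    simpa [vsub_eq_sub, vadd_eq_add, add_comm] using this
  set g : ℝ → affineSpan ℝ D := fun t => ⟨y + t • (x - y), hmem t⟩ with hg
  have hgcont : Continuous g := by
    apply Continuous.subtype_mk
    fun_prop
  have hg1 : g 1 = x' := by
    apply Subtype.ext
    simp [hg, ← hxx]
  have hnhds : g ⁻¹' (interior ((↑) ⁻¹' D : Set (affineSpan ℝ D))) ∈ nhds (1 : ℝ) := by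
    apply (isOpen_interior.preimage hgcont).mem_nhds
    rw [Set.mem_preimage, hg1]; exact hx'
  obtain ⟨ε, hε, hball⟩ := Metric.mem_nhds_iff.1 hnhds
  set t : ℝ := 1 + ε / 2 with ht
  have htb : t ∈ Metric.ball (1:ℝ) ε := by
    rw [Metric.mem_ball, Real.dist_eq, ht, show (1+ε/2) - 1 = ε/2 by ring,
      abs_of_pos (by linarith : (0:ℝ) < ε/2)]
    linarith
  have hzD : y + t • (x - y) ∈ D := by
    have := interior_subset (hball htb)
    simpa [g] using this
  refine ⟨y + t • (x - y), hzD, ?_⟩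
  have ht1 : (1:ℝ) < t := by simp [ht]; linarith
  have ht0 : (0:ℝ) < t := by linarith
  refine ⟨1 - t⁻¹, t⁻¹, ?_, ?_, ?_, ?_⟩
  · have : t⁻¹ < 1 := inv_lt_one_of_one_lt₀ ht1
    linarith
  · positivity
  · ring
  · match_scalars <;> field_simp <;> ring

-- auxiliary lemmas for stmt_7

lemma convex_normalCone' (C : Set E) (x : E) : Convex ℝ (normalCone C x) := by
  intro u hu v hv a b ha hb hab y hy
  have h1 := hu y hy
  have h2 := hv y hy
  simp only [normalCone, Set.mem_setOf_eq] at *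
  rw [inner_add_left, real_inner_smul_left, real_inner_smul_left]
  nlinarith

lemma convex_normalConeOf' (C F : Set E) : Convex ℝ (normalConeOf C F) :=
  convex_iInter fun x => convex_iInter fun _ => convex_normalCone' C x

lemma isFace_self' {C : Set E} (hC : Convex ℝ C) : IsFace C C :=
  ⟨hC, subset_rfl, fun x hx y hy _ => ⟨hx, hy⟩⟩

lemma isFace_empty' {C : Set E} : IsFace C (∅ : Set E) :=
  ⟨convex_empty, Set.empty_subset _, fun x _ y _ h => absurd h (by simp)⟩

lemma isFace_expFace' {C : Set E} (hC : Convex ℝ C) (u : E) : IsFace C (expFace C u) := by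
  refine ⟨?_, fun x hx => hx.1, ?_⟩
  · intro x hx y hy a b ha hb hab
    refine ⟨hC hx.1 hy.1 ha hb hab, fun z hz => ?_⟩
    rw [inner_add_right, real_inner_smul_right, real_inner_smul_right]
    have h1 := hx.2 z hz
    have h2 := hy.2 z hz
    have h4 : (a + b) * ⟪u, z⟫ = ⟪u, z⟫ := by rw [hab, one_mul]
    have h5 := mul_le_mul_of_nonneg_left h1 ha
    have h6 := mul_le_mul_of_nonneg_left h2 hb
    nlinarith
  · rintro x hx y hy ⟨w, hwseg, hwC, hwmax⟩
    obtain ⟨a, b, ha, hb, hab, hw⟩ := hwseg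
    have hxw : ⟪u, x⟫ ≤ ⟪u, w⟫ := hwmax x hx
    have hyw : ⟪u, y⟫ ≤ ⟪u, w⟫ := hwmax y hy
    have hcomb : ⟪u, w⟫ = a * ⟪u, x⟫ + b * ⟪u, y⟫ := by
      rw [← hw, inner_add_right, real_inner_smul_right, real_inner_smul_right]
    have h4 : (a + b) * ⟪u, w⟫ = ⟪u, w⟫ := by rw [hab, one_mul]
    have hxeq : ⟪u, x⟫ = ⟪u, w⟫ := by
      have h3 : b * ⟪u, y⟫ ≤ b * ⟪u, w⟫ := mul_le_mul_of_nonneg_left hyw hb.le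
      have h5 : a * ⟪u, w⟫ ≤ a * ⟪u, x⟫ := by nlinarith
      have := le_of_mul_le_mul_left h5 ha
      linarith
    have hyeq : ⟪u, y⟫ = ⟪u, w⟫ := by
      have h3 : a * ⟪u, x⟫ ≤ a * ⟪u, w⟫ := mul_le_mul_of_nonneg_left hxw ha.le
      have h5 : b * ⟪u, w⟫ ≤ b * ⟪u, y⟫ := by nlinarith
      have := le_of_mul_le_mul_left h5 hb
      linarith
    exact ⟨⟨hx, fun z hz => hxeq ▸ hwmax z hz⟩, ⟨hy, fun z hz => hyeq ▸ hwmax z hz⟩⟩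

lemma mem_normalConeOf' {C F : Set E} {u : E} :
    u ∈ normalConeOf C F ↔ ∀ x ∈ intrinsicInterior ℝ F, u ∈ normalCone C x := by
  simp [normalConeOf]

lemma mem_expFace_of_normalCone {C : Set E} {u x : E} (hx : x ∈ C)
    (h : u ∈ normalCone C x) : x ∈ expFace C u := by
  refine ⟨hx, fun y hy => ?_⟩
  have := h y hy
  rw [inner_sub_right] at this
  linarith

lemma mem_normalCone_of_expFace {C : Set E} {u x : E} (h : x ∈ expFace C u) :
    u ∈ normalCone C x := by
  intro y hy
  rw [inner_sub_right]
  have := h.2 y hy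
  linarith

/-- A face of `C` that meets the intrinsic interior of a convex subset `D ⊆ C`
contains all of `D`. -/
lemma face_absorb {C F D : Set E} (hF : IsFace C F) (hD : D ⊆ C) {g : E}
    (hg : g ∈ intrinsicInterior ℝ D) (hgF : g ∈ F) : D ⊆ F := by
  intro y hy
  obtain ⟨z, hz, hseg⟩ := exists_openSegment' hg hy
  exact (hF.2.2 y (hD hy) z (hD hz) ⟨g, hseg, hgF⟩).1

/-- A nonempty intersection-family of normal cones of a convex set `C` has
intersection a normal cone of `C`, and the intersection is a face of every member `N α̃`
with `N α̃ ≠ E`. -/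
theorem stmt_7 (C : Set E) (hC : Convex ℝ C) {ι : Type*} [Nonempty ι]
    (N : ι → Set E) (hN : ∀ α, IsNormalCone C (N α)) :
    IsNormalCone C (⋂ α, N α) ∧
    ∀ α, N α ≠ Set.univ → IsFace (N α) (⋂ α', N α') := by
  classical
  choose F hF hNF using hN
  have hFC : ∀ α, F α ⊆ C := fun α => (hF α).2.1
  constructor
  · by_cases hall : ∀ α, N α = Set.univ
    · refine ⟨∅, isFace_empty', ?_⟩
      rw [Set.iInter_eq_univ.2 hall]
      simp [normalConeOf, intrinsicInterior_empty]
    · push_neg at hall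
      obtain ⟨α₀, hα₀⟩ := hall
      set S : Set E := ⋃ α, intrinsicInterior ℝ (F α) with hS
      set 𝒢 : Set (Set E) := {G | IsFace C G ∧ S ⊆ G} with h𝒢
      set G : Set E := ⋂₀ 𝒢 with hG
      have hSC : S ⊆ C := Set.iUnion_subset fun α => intrinsicInterior_subset.trans (hFC α)
      have hCmem : C ∈ 𝒢 := ⟨isFace_self' hC, hSC⟩
      have hGC : G ⊆ C := Set.sInter_subset_of_mem hCmem
      have hSG : S ⊆ G := Set.subset_sInter fun t ht => ht.2
      have hGface : IsFace C G := by
        refine ⟨convex_sInter fun t ht => ht.1.1, hGC, ?_⟩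
        rintro x hx y hy ⟨w, hwseg, hwG⟩
        have hall' : ∀ t ∈ 𝒢, x ∈ t ∧ y ∈ t := fun t ht =>
          ht.1.2.2 x hx y hy ⟨w, hwseg, (Set.mem_sInter.1 hwG) t ht⟩
        exact ⟨Set.mem_sInter.2 fun t ht => (hall' t ht).1,
          Set.mem_sInter.2 fun t ht => (hall' t ht).2⟩
      refine ⟨G, hGface, ?_⟩
      apply Set.Subset.antisymm
      · intro u hu
        have huα : ∀ α, u ∈ normalConeOf C (F α) := by
          intro α
          have := Set.mem_iInter.1 hu α
          rwa [hNF α] at this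
        have hSexp : S ⊆ expFace C u := by
          rintro y hy
          obtain ⟨α, hyα⟩ := Set.mem_iUnion.1 hy
          exact mem_expFace_of_normalCone (hFC α (intrinsicInterior_subset hyα))
            (mem_normalConeOf'.1 (huα α) y hyα)
        have hGexp : G ⊆ expFace C u := Set.sInter_subset_of_mem ⟨isFace_expFace' hC u, hSexp⟩
        exact mem_normalConeOf'.2 fun x hx =>
          mem_normalCone_of_expFace (hGexp (intrinsicInterior_subset hx))
      · intro u hu
        have hri₀ : (intrinsicInterior ℝ (F α₀)).Nonempty := by
          by_contra h
          rw [Set.not_nonempty_iff_eq_empty] at h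
          apply hα₀
          rw [hNF α₀]
          simp [normalConeOf, h]
        have hGne : G.Nonempty := hri₀.mono ((Set.subset_iUnion _ α₀).trans hSG)
        have hGconv : Convex ℝ G := convex_sInter fun t ht => ht.1.1
        obtain ⟨g, hg⟩ := hGne.intrinsicInterior hGconv
        have hgG : g ∈ G := intrinsicInterior_subset hg
        have hgexp : g ∈ expFace C u :=
          mem_expFace_of_normalCone (hGC hgG) (mem_normalConeOf'.1 hu g hg)
        have hGexp : G ⊆ expFace C u := face_absorb (isFace_expFace' hC u) hGC hg hgexp
        rw [Set.mem_iInter]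
        intro α
        rw [hNF α]
        exact mem_normalConeOf'.2 fun x hx =>
          mem_normalCone_of_expFace (hGexp (hSG (Set.mem_iUnion.2 ⟨α, hx⟩)))
  · intro α' hne
    have hri : (intrinsicInterior ℝ (F α')).Nonempty := by
      by_contra h
      rw [Set.not_nonempty_iff_eq_empty] at h
      apply hne
      rw [hNF α']
      simp [normalConeOf, h]
    obtain ⟨x₀, hx₀⟩ := hri
    have hx₀C : x₀ ∈ C := hFC α' (intrinsicInterior_subset hx₀)
    refine ⟨convex_iInter fun α => by rw [hNF α]; exact convex_normalConeOf' C (F α),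
      Set.iInter_subset _ α', ?_⟩
    rintro u hu v hv ⟨w, hwseg, hwT⟩
    obtain ⟨a, b, ha, hb, hab, hw⟩ := hwseg
    rw [hNF α'] at hu hv
    have hu₀ : ∀ z ∈ C, ⟪u, z - x₀⟫ ≤ 0 := fun z hz => mem_normalConeOf'.1 hu x₀ hx₀ z hz
    have hv₀ : ∀ z ∈ C, ⟪v, z - x₀⟫ ≤ 0 := fun z hz => mem_normalConeOf'.1 hv x₀ hx₀ z hz
    have hw' : ∀ α, ∀ x ∈ intrinsicInterior ℝ (F α), ∀ z ∈ C, ⟪w, z - x⟫ ≤ 0 := by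
      intro α x hx z hz
      have := Set.mem_iInter.1 hwT α
      rw [hNF α] at this
      exact mem_normalConeOf'.1 this x hx z hz
    have key : ∀ α, ∀ x ∈ intrinsicInterior ℝ (F α), ⟪u, x - x₀⟫ = 0 ∧ ⟪v, x - x₀⟫ = 0 := by
      intro α x hx
      have hxC : x ∈ C := hFC α (intrinsicInterior_subset hx)
      have h1 : ⟪w, x - x₀⟫ ≤ 0 := hw' α' x₀ hx₀ x hxC
      have h2 : ⟪w, x₀ - x⟫ ≤ 0 := hw' α x hx x₀ hx₀C
      have hwe : ⟪w, x - x₀⟫ = 0 := by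
        rw [inner_sub_right] at h1 h2 ⊢
        linarith
      have hcomb : ⟪w, x - x₀⟫ = a * ⟪u, x - x₀⟫ + b * ⟪v, x - x₀⟫ := by
        rw [← hw, inner_add_left, real_inner_smul_left, real_inner_smul_left]
      have hun : ⟪u, x - x₀⟫ ≤ 0 := hu₀ x hxC
      have hvn : ⟪v, x - x₀⟫ ≤ 0 := hv₀ x hxC
      constructor <;> nlinarith
    constructor <;> rw [Set.mem_iInter] <;> intro α <;> rw [hNF α] <;>
      refine mem_normalConeOf'.2 fun x hx z hz => ?_
    · have hk := (key α x hx).1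
      have h0 := hu₀ z hz
      rw [inner_sub_right] at hk h0 ⊢
      linarith
    · have hk := (key α x hx).2
      have h0 := hv₀ z hz
      rw [inner_sub_right] at hk h0 ⊢
      linarith
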